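/- For every convex set Δ ⊆ ℝⁿ and every m̄ ∈ (ℝ_{>0})^r, s(Δ;m̄) = s(Δ°;m̄), where Δ° denotes the interior of Δ. -/

import Mathlib

open scoped BigOperators Pointwise

noncomputable section

/-- The Laurent polynomial ring `R = ℂ[x₁^{±1},…,x_n^{±1}]`, as the monoid algebra of `ℤⁿ`. -/
abbrev Laurent (n : ℕ) := AddMonoidAlgebra ℂ (Fin n → ℤ)

namespace OkSesh

variable {n : ℕ}

instance (n : ℕ) : IsDomain (Laurent n) := NoZeroDivisors.to_isDomain _

/-- The monomial `x^u` for `u ∈ ℤⁿ`. -/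
def mono (u : Fin n → ℤ) : Laurent n := AddMonoidAlgebra.single u 1

/-- casting ℤⁿ into ℝⁿ -/
def castR (u : Fin n → ℤ) : Fin n → ℝ := fun i => (u i : ℝ)

/-- casting ℕⁿ into ℝⁿ -/
def castN (u : Fin n → ℕ) : Fin n → ℝ := fun i => (u i : ℝ)

/-- The character of the torus `(ℂ*)ⁿ` at a point `p`, as a monoid hom into `ℂˣ`. -/
def torusCharU (p : Fin n → ℂˣ) : Multiplicative (Fin n → ℤ) →* ℂˣ where
  toFun u := ∏ i, (p i) ^ (Multiplicative.toAdd u i)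
  map_one' := by simp
  map_mul' u v := by
    simp only [toAdd_mul, Pi.add_apply, zpow_add, Finset.prod_mul_distrib]

/-- Evaluation of Laurent polynomials at a point `p ∈ (ℂ*)ⁿ`. -/
def evalAt (p : Fin n → ℂˣ) : Laurent n →ₐ[ℂ] ℂ :=
  AddMonoidAlgebra.lift ℂ ℂ (Fin n → ℤ) ((Units.coeHom ℂ).comp (torusCharU p))

/-- The ideal `𝔪_p^{m+1}`, interpreted as the unit ideal when `m ≤ -1`. -/
def jetIdeal (p : Fin n → ℂˣ) (m : ℤ) : Ideal (Laurent n) :=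
  (RingHom.ker (evalAt p : Laurent n →+* ℂ)) ^ (m + 1).toNat

/-- `W` separates `m̄`-jets at the points `p i`. -/
def SeparatesJetsAt {ι : Type} (W : Submodule ℂ (Laurent n)) (m : ι → ℤ)
    (p : ι → Fin n → ℂˣ) : Prop :=
  Function.Surjective fun (w : W) (i : ι) =>
    Ideal.Quotient.mk (jetIdeal (p i) (m i)) (w : Laurent n)

/-- `W` generically separates `m̄`-jets: there is a nonempty Zariski open subset of
`((ℂ*)ⁿ)^r` (given by the nonvanishing of a polynomial `F` in the coordinates of the
points) on whose tuples of pairwise distinct points `W` separates `m̄`-jets. -/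
def GenSepJets {ι : Type} [Fintype ι] (W : Submodule ℂ (Laurent n)) (m : ι → ℤ) : Prop :=
  ∃ F : MvPolynomial (ι × Fin n) ℂ,
    (∃ p : ι → Fin n → ℂˣ, MvPolynomial.eval (fun q => (p q.1 q.2 : ℂ)) F ≠ 0) ∧
    ∀ p : ι → Fin n → ℂˣ, Function.Injective p →
      MvPolynomial.eval (fun q => (p q.1 q.2 : ℂ)) F ≠ 0 → SeparatesJetsAt W m p

/-- `j(W; m̄) = sup { t ∈ ℝ | W generically separates ⌈t·m̄⌉-jets }`, as an extended real. -/
def jSep {ι : Type} [Fintype ι] (W : Submodule ℂ (Laurent n)) (m : ι → ℝ) : EReal :=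
  sSup ((fun t : ℝ => (t : EReal)) '' {t : ℝ | GenSepJets W fun i => ⌈t * m i⌉})

/-- The Seshadri constant `ε(W•; m̄) = sup_{k>0} j(W_k; m̄)/k` of a graded linear series. -/
def seshadri {ι : Type} [Fintype ι] (W : ℕ → Submodule ℂ (Laurent n)) (m : ι → ℝ) : EReal :=
  ⨆ k : {k : ℕ // 0 < k}, jSep (W (k : ℕ)) m * ((((k : ℕ) : ℝ))⁻¹ : EReal)

/-- `V_S`, the span of the monomials `x^u` with `u ∈ S ∩ ℤⁿ`. -/
def VS (S : Set (Fin n → ℝ)) : Submodule ℂ (Laurent n) :=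
  Submodule.span ℂ {f | ∃ u : Fin n → ℤ, castR u ∈ S ∧ f = mono u}

/-- `s̃(S; m̄) = j(V_S; m̄)`. -/
def sTilde {ι : Type} [Fintype ι] (S : Set (Fin n → ℝ)) (m : ι → ℝ) : EReal :=
  jSep (VS S) m

/-- The dilation `kΔ`. -/
def dilate (k : ℕ) (Δ : Set (Fin n → ℝ)) : Set (Fin n → ℝ) := (fun v => (k : ℝ) • v) '' Δ

open scoped Classical in
/-- `s(Δ; m̄) = sup_{k>0} s̃(kΔ; m̄)/k` if `dim Δ = n`, and `0` otherwise. -/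
def sConv {ι : Type} [Fintype ι] (Δ : Set (Fin n → ℝ)) (m : ι → ℝ) : EReal :=
  if affineSpan ℝ Δ = ⊤ then
    ⨆ k : {k : ℕ // 0 < k}, sTilde (dilate (k : ℕ) Δ) m * ((((k : ℕ) : ℝ))⁻¹ : EReal)
  else 0

/-- The nonnegative orthant in `ℝⁿ`; `V` of it is the polynomial subring `ℂ[x₁,…,x_n] ⊆ R`. -/
def nonnegOrthant (n : ℕ) : Set (Fin n → ℝ) := {v | ∀ i, 0 ≤ v i}

/-- A graded linear series on `ℂⁿ`: a sequence of subspaces `W_k ⊆ ℂ[x₁,…,x_n] ⊆ R` with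
`W₀ = ℂ` and `W_k · W_l ⊆ W_{k+l}`. -/
structure GLS (n : ℕ) where
  W : ℕ → Submodule ℂ (Laurent n)
  poly : ∀ k, W k ≤ VS (nonnegOrthant n)
  zero_eq : W 0 = Submodule.span ℂ {(1 : Laurent n)}
  mul_mem : ∀ k l : ℕ, ∀ f ∈ W k, ∀ g ∈ W l, f * g ∈ W (k + l)

/-- The subfield of `ℂ(x₁,…,x_n)` generated over `ℂ` by the ratios `f/g`, `f, g ∈ W`. -/
def ratioField (Wk : Submodule ℂ (Laurent n)) : Subfield (FractionRing (Laurent n)) :=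
  Subfield.closure
    ({q | ∃ c : ℂ, q = algebraMap (Laurent n) (FractionRing (Laurent n)) (algebraMap ℂ (Laurent n) c)} ∪
     {q | ∃ f ∈ Wk, ∃ g ∈ Wk, g ≠ 0 ∧
        q = algebraMap (Laurent n) (FractionRing (Laurent n)) f /
            algebraMap (Laurent n) (FractionRing (Laurent n)) g})

/-- A graded linear series is birational if for all large `k` the ratios of elements of `W_k`
generate the whole function field over `ℂ`. -/
def IsBirational (G : GLS n) : Prop :=
  ∃ N : ℕ, ∀ k ≥ N, ratioField (G.W k) = ⊤

/-- A monomial order on `ℕⁿ`: a (strict) total order compatible with addition such that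
`0` is the smallest element. -/
structure MonOrder (n : ℕ) where
  gt : (Fin n → ℕ) → (Fin n → ℕ) → Prop
  trans : ∀ {u v w}, gt u v → gt v w → gt u w
  asymm : ∀ {u v}, gt u v → ¬ gt v u
  total : ∀ u v, u = v ∨ gt u v ∨ gt v u
  pos : ∀ u : Fin n → ℕ, u ≠ 0 → gt u 0
  add_right : ∀ u v w, gt v u → gt (w + v) (w + u)

open scoped Classical in
/-- `ν(f)`: the `>`-least exponent appearing in the polynomial `f` (junk value `0` if there
is no such exponent). -/
def nu (t : MonOrder n) (f : Laurent n) : Fin n → ℕ :=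
  if h : ∃ u : Fin n → ℕ, f.coeff (fun i => (u i : ℤ)) ≠ 0 ∧
      ∀ v : Fin n → ℕ, f.coeff (fun i => (v i : ℤ)) ≠ 0 → v ≠ u → t.gt v u
  then h.choose else 0

/-- The semigroup `Γ_{W•} = ∪_k {k} × ν(W_k \ {0}) ⊆ ℕ × ℕⁿ`. -/
def gamma (t : MonOrder n) (G : GLS n) : Set (ℕ × (Fin n → ℕ)) :=
  {p | ∃ f ∈ G.W p.1, f ≠ 0 ∧ p.2 = nu t f}

/-- The closed convex cone spanned by a set. -/
def coneSpan {E : Type*} [AddCommMonoid E] [Module ℝ E] [TopologicalSpace E] (S : Set E) :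
    Set E :=
  closure {x | ∃ c : ℝ, 0 ≤ c ∧ ∃ y ∈ convexHull ℝ S, x = c • y}

/-- A subset of `ℕ × ℕⁿ` regarded inside `ℝ × ℝⁿ`. -/
def gammaR (Γ : Set (ℕ × (Fin n → ℕ))) : Set (ℝ × (Fin n → ℝ)) :=
  (fun p => ((p.1 : ℝ), castN p.2)) '' Γ

/-- `Δ(Γ) = Σ(Γ) ∩ ({1} × ℝⁿ)`, viewed in `ℝⁿ`. -/
def okBody (Γ : Set (ℕ × (Fin n → ℕ))) : Set (Fin n → ℝ) :=
  {v | ((1 : ℝ), v) ∈ coneSpan (gammaR Γ)}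

/-- The Okounkov body `Δ_>(W•)` of a graded linear series with respect to a monomial order. -/
def okounkov (t : MonOrder n) (G : GLS n) : Set (Fin n → ℝ) := okBody (gamma t G)

end OkSesh

namespace OkSesh

variable {n : ℕ}

/-- The `l`-th Veronese `W•^{(l)}`, given by `W_k^{(l)} = W_{kl}`. -/
def GLS.shift (G : GLS n) (l : ℕ) : GLS n where
  W k := G.W (k * l)
  poly k := G.poly (k * l)
  zero_eq := by
    show G.W (0 * l) = _
    rw [Nat.zero_mul]; exact G.zero_eq
  mul_mem k k' f hf g hg := by
    have h := G.mul_mem (k * l) (k' * l) f hf g hg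
    rwa [← add_mul] at h

/-- The Laurent polynomial `(x - 1_n)^λ = ∏ (x_i - 1)^{λ_i}`. -/
def xSubOnePow (l : Fin n → ℕ) : Laurent n :=
  ∏ i, (mono (Pi.single i 1) - 1) ^ (l i)

/-- The monomial ideal `𝔫` (in `x - 1_n`) attached to the complement of `Φ`. -/
def idealN (Φ : Finset (Fin n → ℕ)) : Ideal (Laurent n) :=
  Ideal.span {g | ∃ l : Fin n → ℕ, l ∉ Φ ∧ g = xSubOnePow l}

/-- The rank of a (possibly infinite) matrix: the dimension of its column space. -/
def colRank {ι κ : Type*} (A : ι → κ → ℂ) : ℕ :=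
  Module.finrank ℂ (Submodule.span ℂ (Set.range fun c : κ => fun i : ι => A i c))

/-- The matrix `A_{S,𝔫} = ([u;λ])` with rows indexed by `Φ` and columns by `S ∩ ℕⁿ`. -/
def binomMat (Φ : Finset (Fin n → ℕ)) (S : Set (Fin n → ℝ)) :
    {l // l ∈ Φ} → {u : Fin n → ℕ // castN u ∈ S} → ℂ :=
  fun l u => ((∏ k, (u.1 k).choose (l.1 k) : ℕ) : ℂ)

/-- The matrix `A_{S,m}` with rows indexed by `{λ : |λ| ≤ m}` and columns by `S ∩ ℕⁿ`. -/
def degMat (S : Set (Fin n → ℝ)) (m : ℕ) :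
    {l : Fin n → ℕ // ∑ i, l i ≤ m} → {u : Fin n → ℕ // castN u ∈ S} → ℂ :=
  fun l u => ((∏ k, (u.1 k).choose (l.1 k) : ℕ) : ℂ)

/-- `max { m ∈ ℕ | rank A_{S,m} = C(m+n,n) }`. -/
def maxJet (S : Set (Fin n → ℝ)) : ℕ :=
  sSup {m : ℕ | colRank (degMat S m) = (m + n).choose n}

/-- The real extension `ι_ℝ : ℝⁿ → ℝⁿ` of a group homomorphism `ι : ℤⁿ → ℤⁿ`. -/
def realify (f : (Fin n → ℤ) →+ (Fin n → ℤ)) (v : Fin n → ℝ) : Fin n → ℝ :=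
  fun j => ∑ i, v i * ((f (Pi.single i 1)) j : ℝ)

/-- An integral polytope: the convex hull of a finite set of lattice points. -/
def IsIntegralPolytope (P : Set (Fin n → ℝ)) : Prop :=
  ∃ V : Finset (Fin n → ℤ), P = convexHull ℝ (castR '' (V : Set (Fin n → ℤ)))

/-- `τ` is a face of `σ`: it is cut out on `σ` by a linear functional maximized on `σ`. -/
def IsFaceOf (τ σ : Set (Fin n → ℝ)) : Prop :=
  ∃ (g : (Fin n → ℝ) →ₗ[ℝ] ℝ) (c : ℝ), (∀ x ∈ σ, g x ≤ c) ∧ τ = {x ∈ σ | g x = c}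

/-- An integral polytope decomposition of `P`. -/
structure IsIntDecomp (P : Set (Fin n → ℝ)) (Pc : Finset (Set (Fin n → ℝ))) : Prop where
  integral : ∀ σ ∈ Pc, IsIntegralPolytope σ
  cover : P = ⋃ σ ∈ Pc, σ
  faces : ∀ σ ∈ Pc, ∀ τ, IsFaceOf τ σ → τ.Nonempty → τ ∈ Pc
  inter : ∀ σ ∈ Pc, ∀ σ' ∈ Pc, (σ ∩ σ').Nonempty →
    IsFaceOf (σ ∩ σ') σ ∧ IsFaceOf (σ ∩ σ') σ'

/-- A lifting function of an integral polytope decomposition `Pc` of `P`: piecewise affine and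
strictly convex with respect to `Pc`, taking integral values on lattice points of `P`. -/
def IsLifting (P : Set (Fin n → ℝ)) (Pc : Finset (Set (Fin n → ℝ)))
    (φ : (Fin n → ℝ) → ℝ) : Prop :=
  ConvexOn ℝ P φ ∧
  (∀ σ ∈ Pc, ∃ a : (Fin n → ℝ) →ᵃ[ℝ] ℝ, ∀ x ∈ σ, φ x = a x) ∧
  (∀ σ ∈ Pc, ∀ σ' ∈ Pc, affineSpan ℝ σ = ⊤ → affineSpan ℝ σ' = ⊤ → σ ≠ σ' →
    ¬ ∃ a : (Fin n → ℝ) →ᵃ[ℝ] ℝ, (∀ x ∈ σ, φ x = a x) ∧ (∀ x ∈ σ', φ x = a x)) ∧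
  (∀ u : Fin n → ℤ, castR u ∈ P → ∃ z : ℤ, φ (castR u) = (z : ℝ))

end OkSesh

namespace OkSesh

variable {n : ℕ}

lemma mono_mul (a b : Fin n → ℤ) : mono a * mono b = mono (a + b) := by
  simp [mono, AddMonoidAlgebra.single_mul_single]

lemma mono_zero : mono (0 : Fin n → ℤ) = 1 := rfl

lemma mono_neg_mul (a : Fin n → ℤ) : mono (-a) * mono a = 1 := by
  rw [mono_mul, neg_add_cancel, mono_zero]

/-- Surjectivity criterion for jet separation. -/
lemma sepIff {ι : Type} (W : Submodule ℂ (Laurent n)) (m : ι → ℤ) (p : ι → Fin n → ℂˣ) :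
    SeparatesJetsAt W m p ↔
      ∀ x : ι → Laurent n, ∃ w ∈ W, ∀ i, w - x i ∈ jetIdeal (p i) (m i) := by
  constructor
  · intro h x
    obtain ⟨w, hw⟩ := h fun i => Ideal.Quotient.mk (jetIdeal (p i) (m i)) (x i)
    exact ⟨w, w.2, fun i => Ideal.Quotient.eq.1 (congrFun hw i)⟩
  · intro h y
    choose x hx using fun i => Ideal.Quotient.mk_surjective (I := jetIdeal (p i) (m i)) (y i)
    obtain ⟨w, hwW, hw⟩ := h x
    exact ⟨⟨w, hwW⟩, funext fun i => by rw [← hx i]; exact Ideal.Quotient.eq.2 (hw i)⟩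

section Core

variable {ι : Type} [Fintype ι] [DecidableEq ι]

/-- Single-site downward induction for the product lemma. -/
lemma core_step (I : ι → Ideal (Laurent n)) (A B : ι → ℕ)
    (hA : ∀ i, 1 ≤ A i) (hB : ∀ i, 1 ≤ B i)
    (W W' : Submodule ℂ (Laurent n))
    (hW : ∀ x : ι → Laurent n, ∃ w ∈ W, ∀ i, w - x i ∈ I i ^ A i)
    (hW' : ∀ x : ι → Laurent n, ∃ w ∈ W', ∀ i, w - x i ∈ I i ^ B i)
    (i₀ : ι) :
    ∀ d : ℕ, ∀ x ∈ I i₀ ^ (A i₀ + B i₀ - 1 - d),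
      ∃ u ∈ W * W', u - x ∈ I i₀ ^ (A i₀ + B i₀ - 1) ∧
        ∀ j, j ≠ i₀ → u ∈ I j ^ (A j + B j - 1) := by
  intro d
  induction d with
  | zero =>
    intro x hx
    refine ⟨0, zero_mem _, ?_, fun j _ => zero_mem _⟩
    simpa using neg_mem hx
  | succ d IH =>
    intro x hx
    by_cases hd : A i₀ + B i₀ - 1 ≤ d
    · exact IH x (by rwa [show A i₀ + B i₀ - 1 - d = A i₀ + B i₀ - 1 - (d+1) by omega])
    · set s : ℕ := A i₀ + B i₀ - 1 - (d + 1) with hs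
      set d₁ : ℕ := min s (A i₀ - 1) with hd₁
      set e : ℕ := s - d₁ with he
      have hde : d₁ + e = s := by omega
      have hd₁A : d₁ + 1 ≤ A i₀ := by have := hA i₀; omega
      have heB : e + 1 ≤ B i₀ := by have := hA i₀; have := hB i₀; omega
      have hxmem : x ∈ I i₀ ^ d₁ * I i₀ ^ e := by
        rw [← pow_add, hde]; exact hx
      have key : ∃ u₀ ∈ W * W', u₀ - x ∈ I i₀ ^ (s + 1) ∧
          ∀ j, j ≠ i₀ → u₀ ∈ I j ^ (A j + B j) := by
        refine Submodule.mul_induction_on hxmem ?_ ?_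
        · intro f hf g hg
          obtain ⟨w, hwW, hw⟩ := hW fun j => if j = i₀ then f else 0
          obtain ⟨w', hw'W, hw'⟩ := hW' fun j => if j = i₀ then g else 0
          have hwf : w - f ∈ I i₀ ^ A i₀ := by simpa using hw i₀
          have hw'g : w' - g ∈ I i₀ ^ B i₀ := by simpa using hw' i₀
          refine ⟨w * w', Submodule.mul_mem_mul hwW hw'W, ?_, ?_⟩
          · have hsum : w * w' - f * g
                = f * (w' - g) + (w - f) * (w' - g) + (w - f) * g := by ring
            rw [hsum]
            have h1' : f * (w' - g) ∈ I i₀ ^ (d₁ + B i₀) := by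
              rw [pow_add]; exact Submodule.mul_mem_mul hf hw'g
            have h1 : f * (w' - g) ∈ I i₀ ^ (s + 1) :=
              Ideal.pow_le_pow_right (by omega) h1'
            have h2' : (w - f) * (w' - g) ∈ I i₀ ^ (A i₀ + B i₀) := by
              rw [pow_add]; exact Submodule.mul_mem_mul hwf hw'g
            have h2 : (w - f) * (w' - g) ∈ I i₀ ^ (s + 1) :=
              Ideal.pow_le_pow_right (by omega) h2'
            have h3' : (w - f) * g ∈ I i₀ ^ (A i₀ + e) := by
              rw [pow_add]; exact Submodule.mul_mem_mul hwf hg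
            have h3 : (w - f) * g ∈ I i₀ ^ (s + 1) :=
              Ideal.pow_le_pow_right (by omega) h3' 
            exact add_mem (add_mem h1 h2) h3
          · intro j hj
            have h1 : w - 0 ∈ I j ^ A j := by simpa only [if_neg hj] using hw j
            have h2 : w' - 0 ∈ I j ^ B j := by simpa only [if_neg hj] using hw' j
            rw [sub_zero] at h1 h2
            rw [pow_add]
            exact Submodule.mul_mem_mul h1 h2
        · rintro x₁ x₂ ⟨u₁, hu₁, hd₁', hj₁⟩ ⟨u₂, hu₂, hd₂', hj₂⟩
          refine ⟨u₁ + u₂, add_mem hu₁ hu₂, ?_, fun j hj => add_mem (hj₁ j hj) (hj₂ j hj)⟩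
          have : u₁ + u₂ - (x₁ + x₂) = (u₁ - x₁) + (u₂ - x₂) := by ring
          rw [this]; exact add_mem hd₁' hd₂'
      obtain ⟨u₀, hu₀mem, hu₀, hu₀j⟩ := key
      have hx' : x - u₀ ∈ I i₀ ^ (A i₀ + B i₀ - 1 - d) := by
        rw [show A i₀ + B i₀ - 1 - d = s + 1 by omega]
        simpa using neg_mem hu₀
      obtain ⟨u₁, hu₁mem, hu₁, hu₁j⟩ := IH (x - u₀) hx'
      refine ⟨u₀ + u₁, add_mem hu₀mem hu₁mem, ?_, fun j hj => ?_⟩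
      · have : u₀ + u₁ - x = u₁ - (x - u₀) := by ring
        rw [this]; exact hu₁
      · exact add_mem (Ideal.pow_le_pow_right (by omega) (hu₀j j hj)) (hu₁j j hj)

/-- Multi-point product lemma: products separate the sum of the jets. -/
lemma core (I : ι → Ideal (Laurent n)) (A B : ι → ℕ)
    (hA : ∀ i, 1 ≤ A i) (hB : ∀ i, 1 ≤ B i)
    (W W' : Submodule ℂ (Laurent n))
    (hW : ∀ x : ι → Laurent n, ∃ w ∈ W, ∀ i, w - x i ∈ I i ^ A i)
    (hW' : ∀ x : ι → Laurent n, ∃ w ∈ W', ∀ i, w - x i ∈ I i ^ B i) :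
    ∀ x : ι → Laurent n, ∃ u ∈ W * W', ∀ i, u - x i ∈ I i ^ (A i + B i - 1) := by
  intro x
  have hx0 : ∀ i : ι, x i ∈ I i ^ (A i + B i - 1 - (A i + B i - 1)) := by
    intro i; rw [Nat.sub_self, pow_zero, Ideal.one_eq_top]; trivial
  choose u humem hui huj using fun i =>
    core_step I A B hA hB W W' hW hW' i (A i + B i - 1) (x i) (hx0 i)
  refine ⟨∑ i, u i, sum_mem fun i _ => humem i, fun i => ?_⟩
  have hsplit : (∑ j, u j) = u i + ∑ j ∈ Finset.univ.erase i, u j :=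
    (Finset.add_sum_erase _ _ (Finset.mem_univ i)).symm
  rw [hsplit, show u i + (∑ j ∈ Finset.univ.erase i, u j) - x i
      = (u i - x i) + ∑ j ∈ Finset.univ.erase i, u j by ring]
  exact add_mem (hui i) (sum_mem fun j hj => huj j i (Finset.ne_of_mem_erase hj).symm)

end Core

section GenSep

variable {ι : Type} [Fintype ι]

/-- Monotonicity of generic separation under translated inclusion of linear series. -/
lemma genSep_mul_mono {W W' : Submodule ℂ (Laurent n)} {m : ι → ℤ} (q : Fin n → ℤ)
    (h : ∀ w ∈ W, mono q * w ∈ W') (hg : GenSepJets W m) : GenSepJets W' m := by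
  obtain ⟨F, hex, hsep⟩ := hg
  refine ⟨F, hex, fun p hp hF => ?_⟩
  rw [sepIff] at *
  intro x
  obtain ⟨w, hwW, hw⟩ := (sepIff W m p).1 (hsep p hp hF) fun i => mono (-q) * x i
  refine ⟨mono q * w, h w hwW, fun i => ?_⟩
  have : mono q * w - x i = mono q * (w - mono (-q) * x i) := by
    rw [mul_sub, ← mul_assoc, mono_mul, add_neg_cancel, mono_zero, one_mul]
  rw [this]
  exact Ideal.mul_mem_left _ _ (hw i)

lemma genSep_mono {W W' : Submodule ℂ (Laurent n)} {m : ι → ℤ} (h : W ≤ W')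
    (hg : GenSepJets W m) : GenSepJets W' m :=
  genSep_mul_mono 0 (fun w hw => by rw [mono_zero, one_mul]; exact h hw) hg

/-- Separating larger jets implies separating smaller jets. -/
lemma genSep_anti {W : Submodule ℂ (Laurent n)} {m m' : ι → ℤ} (h : ∀ i, m' i ≤ m i)
    (hg : GenSepJets W m) : GenSepJets W m' := by
  obtain ⟨F, hex, hsep⟩ := hg
  refine ⟨F, hex, fun p hp hF => ?_⟩
  rw [sepIff]
  intro x
  obtain ⟨w, hwW, hw⟩ := (sepIff W m p).1 (hsep p hp hF) x
  refine ⟨w, hwW, fun i => ?_⟩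
  exact Ideal.pow_le_pow_right (by have := h i; omega) (hw i)

/-- A nonzero polynomial has a nonvanishing point on the torus. -/
lemma exists_torus_eval_ne_zero (F : MvPolynomial (ι × Fin n) ℂ) (hF : F ≠ 0) :
    ∃ p : ι → Fin n → ℂˣ, MvPolynomial.eval (fun q => (p q.1 q.2 : ℂ)) F ≠ 0 := by
  classical
  set G : MvPolynomial (ι × Fin n) ℂ := F * ∏ q : ι × Fin n, MvPolynomial.X q with hG
  have hGne : G ≠ 0 :=
    mul_ne_zero hF (Finset.prod_ne_zero_iff.2 fun q _ => MvPolynomial.X_ne_zero q)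
  have hev : ∃ c : ι × Fin n → ℂ, MvPolynomial.eval c G ≠ 0 := by
    by_contra hc
    push_neg at hc
    exact hGne (MvPolynomial.funext fun c => by rw [hc c, map_zero])
  obtain ⟨c, hc⟩ := hev
  have hcF : MvPolynomial.eval c F ≠ 0 := fun h => hc (by rw [hG, map_mul, h, zero_mul])
  have hcX : ∀ q : ι × Fin n, c q ≠ 0 := by
    intro q hq
    apply hc
    rw [hG, map_mul, map_prod]
    rw [Finset.prod_eq_zero (Finset.mem_univ q) (by rw [MvPolynomial.eval_X, hq]), mul_zero]
  refine ⟨fun i j => Units.mk0 (c (i, j)) (hcX (i, j)), ?_⟩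
  have : (fun q : ι × Fin n => ((Units.mk0 (c (q.1, q.2)) (hcX (q.1, q.2)) : ℂˣ) : ℂ)) = c := by
    funext q; simp
  rw [this]; exact hcF

/-- Product lemma at the level of generic separation. -/
lemma genSep_mul {W W' : Submodule ℂ (Laurent n)} {a b : ι → ℤ}
    (ha : ∀ i, 0 ≤ a i) (hb : ∀ i, 0 ≤ b i)
    (hWa : GenSepJets W a) (hW'b : GenSepJets W' b) :
    GenSepJets (W * W') (fun i => a i + b i) := by
  classical
  obtain ⟨F, hexF, hsepF⟩ := hWa
  obtain ⟨F', hexF', hsepF'⟩ := hW'b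
  have hFne : F ≠ 0 := by
    obtain ⟨p, hp⟩ := hexF; exact fun h => hp (by rw [h, map_zero])
  have hF'ne : F' ≠ 0 := by
    obtain ⟨p, hp⟩ := hexF'; exact fun h => hp (by rw [h, map_zero])
  refine ⟨F * F', exists_torus_eval_ne_zero _ (mul_ne_zero hFne hF'ne), fun p hp hFF' => ?_⟩
  rw [map_mul, mul_ne_zero_iff] at hFF'
  have hsW := (sepIff W a p).1 (hsepF p hp hFF'.1)
  have hsW' := (sepIff W' b p).1 (hsepF' p hp hFF'.2)
  rw [sepIff]
  have hcore := core (fun i => RingHom.ker (evalAt (p i) : Laurent n →+* ℂ))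
    (fun i => (a i + 1).toNat) (fun i => (b i + 1).toNat)
    (fun i => by show 1 ≤ (a i + 1).toNat; have := ha i; omega)
    (fun i => by show 1 ≤ (b i + 1).toNat; have := hb i; omega)
    W W' hsW hsW'
  intro x
  obtain ⟨u, huWW', hu⟩ := hcore x
  refine ⟨u, huWW', fun i => ?_⟩
  have hexp : (a i + 1).toNat + (b i + 1).toNat - 1 = (a i + b i + 1).toNat := by
    have := ha i; have := hb i; omega
  show u - x i ∈ _ ^ (a i + b i + 1).toNat
  rw [← hexp]
  exact hu i

end GenSep

section VSlemmas

lemma VS_mono {S T : Set (Fin n → ℝ)} (h : S ⊆ T) : VS S ≤ VS T :=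
  Submodule.span_mono (by rintro f ⟨u, hu, rfl⟩; exact ⟨u, h hu, rfl⟩)

lemma mono_mul_mem_VS {q : Fin n → ℤ} {S T : Set (Fin n → ℝ)}
    (h : ∀ u : Fin n → ℤ, castR u ∈ S → castR (q + u) ∈ T) :
    ∀ w ∈ VS S, mono q * w ∈ VS T := by
  intro w hw
  induction hw using Submodule.span_induction with
  | mem f hf =>
    obtain ⟨u, hu, rfl⟩ := hf
    rw [mono_mul]
    exact Submodule.subset_span ⟨q + u, h u hu, rfl⟩
  | zero => rw [mul_zero]; exact zero_mem _
  | add f g _ _ hf hg => rw [mul_add]; exact add_mem hf hg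
  | smul c f _ hf => rw [mul_smul_comm]; exact Submodule.smul_mem _ _ hf

lemma VS_mul {S T U : Set (Fin n → ℝ)}
    (h : ∀ u v : Fin n → ℤ, castR u ∈ S → castR v ∈ T → castR (u + v) ∈ U) :
    VS S * VS T ≤ VS U := by
  rw [Submodule.mul_le]
  intro f hf
  induction hf using Submodule.span_induction with
  | mem f hf =>
    obtain ⟨u, hu, rfl⟩ := hf
    intro g hg
    exact mono_mul_mem_VS (fun v hv => h u v hu hv) g hg
  | zero => intro g hg; rw [zero_mul]; exact zero_mem _
  | add f₁ f₂ _ _ h₁ h₂ => intro g hg; rw [add_mul]; exact add_mem (h₁ g hg) (h₂ g hg)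
  | smul c f _ hf => intro g hg; rw [smul_mul_assoc]; exact Submodule.smul_mem _ _ (hf g hg)

end VSlemmas

section Geometry

/-- Sums of dilates of a convex set. -/
lemma dilate_add_mem {Δ : Set (Fin n → ℝ)} (hΔ : Convex ℝ Δ) {a b : ℕ}
    (hb : 0 < b) {x y : Fin n → ℝ}
    (hx : x ∈ dilate a Δ) (hy : y ∈ dilate b Δ) : x + y ∈ dilate (a + b) Δ := by
  obtain ⟨x₀, hx₀, rfl⟩ := hx
  obtain ⟨y₀, hy₀, rfl⟩ := hy
  have hab : (0 : ℝ) < (a : ℝ) + (b : ℝ) := by positivity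
  have hz : ((a : ℝ) / ((a : ℝ) + b)) • x₀ + ((b : ℝ) / ((a : ℝ) + b)) • y₀ ∈ Δ :=
    hΔ hx₀ hy₀ (by positivity) (by positivity) (by field_simp)
  refine ⟨_, hz, ?_⟩
  have e1 : ((a + b : ℕ) : ℝ) * ((a : ℝ) / ((a : ℝ) + b)) = (a : ℝ) := by
    push_cast; rw [mul_comm, div_mul_cancel₀ _ hab.ne']
  have e2 : ((a + b : ℕ) : ℝ) * ((b : ℝ) / ((a : ℝ) + b)) = (b : ℝ) := by
    push_cast; rw [mul_comm, div_mul_cancel₀ _ hab.ne']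
  dsimp only
  rw [smul_add, smul_smul, smul_smul, e1, e2]

/-- Translating a dilate by a lattice point of a dilated interior lands in the open dilate. -/
lemma shift_dilate_mem {Δ : Set (Fin n → ℝ)} (hΔ : Convex ℝ Δ) {k₀ : ℕ} (hk₀ : 0 < k₀)
    {q : Fin n → ℤ} (hq : castR q ∈ dilate k₀ (interior Δ)) (k : ℕ) :
    ∀ y ∈ dilate k Δ, castR q + y ∈ dilate (k + k₀) (interior Δ) := by
  rintro _ ⟨x, hx, rfl⟩
  obtain ⟨z, hz, hqz⟩ := hq
  have hqz' : (k₀ : ℝ) • z = castR q := hqz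
  have hN : (0 : ℝ) < (k : ℝ) + k₀ := by positivity
  have hw : ((k₀ : ℝ) / ((k : ℝ) + k₀)) • z + ((k : ℝ) / ((k : ℝ) + k₀)) • x ∈ interior Δ :=
    hΔ.combo_interior_self_mem_interior hz hx (by positivity) (by positivity)
      (by field_simp; ring)
  refine ⟨_, hw, ?_⟩
  have e1 : ((k + k₀ : ℕ) : ℝ) * ((k₀ : ℝ) / ((k : ℝ) + k₀)) = (k₀ : ℝ) := by
    push_cast; rw [mul_comm, div_mul_cancel₀ _ hN.ne']
  have e2 : ((k + k₀ : ℕ) : ℝ) * ((k : ℝ) / ((k : ℝ) + k₀)) = (k : ℝ) := by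
    push_cast; rw [mul_comm, div_mul_cancel₀ _ hN.ne']
  dsimp only
  rw [smul_add, smul_smul, smul_smul, e1, e2, hqz']

/-- Some dilate of a nonempty open set contains a lattice point. -/
lemma exists_lattice_point {S : Set (Fin n → ℝ)} (hS : IsOpen S) (hne : S.Nonempty) :
    ∃ (k₀ : ℕ) (q : Fin n → ℤ), 0 < k₀ ∧ castR q ∈ dilate k₀ S := by
  obtain ⟨x, hx⟩ := hne
  obtain ⟨ε, hε, hball⟩ := Metric.isOpen_iff.1 hS x hx
  set k₀ : ℕ := ⌈ε⁻¹⌉₊ + 1 with hk₀def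
  have hk₀pos : (0 : ℝ) < (k₀ : ℝ) := by positivity
  have hk₀inv : (1 : ℝ) / (k₀ : ℝ) < ε := by
    rw [div_lt_iff₀ hk₀pos]
    have h1 : ε⁻¹ < (k₀ : ℝ) := by
      have := Nat.le_ceil ε⁻¹
      push_cast [hk₀def]
      linarith
    calc (1 : ℝ) = ε * ε⁻¹ := by rw [mul_inv_cancel₀ hε.ne']
    _ < ε * k₀ := by exact mul_lt_mul_of_pos_left h1 hε
  refine ⟨k₀, fun i => round ((k₀ : ℝ) * x i), Nat.succ_pos _, ?_⟩
  set z : Fin n → ℝ := fun i => ((round ((k₀ : ℝ) * x i) : ℤ) : ℝ) / (k₀ : ℝ) with hzdef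
  have hzball : z ∈ Metric.ball x ε := by
    rw [Metric.mem_ball, dist_pi_lt_iff hε]
    intro i
    rw [Real.dist_eq]
    have harith : z i - x i = (((round ((k₀ : ℝ) * x i) : ℤ) : ℝ) - (k₀ : ℝ) * x i) / k₀ := by
      rw [hzdef]; field_simp
    rw [harith, abs_div, abs_of_pos hk₀pos]
    have hround : |((round ((k₀ : ℝ) * x i) : ℤ) : ℝ) - (k₀ : ℝ) * x i| ≤ 1 / 2 := by
      rw [abs_sub_comm]; exact abs_sub_round _
    have h2 : |((round ((k₀ : ℝ) * x i) : ℤ) : ℝ) - (k₀ : ℝ) * x i| / (k₀ : ℝ)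
        ≤ (1 / 2) / (k₀ : ℝ) := by gcongr
    have h3 : ((1 : ℝ) / 2) / (k₀ : ℝ) ≤ 1 / (k₀ : ℝ) := by gcongr; norm_num
    linarith
  refine ⟨z, hball hzball, ?_⟩
  funext i
  show (k₀ : ℝ) * z i = ((round ((k₀ : ℝ) * x i) : ℤ) : ℝ)
  rw [hzdef]
  field_simp

end Geometry

lemma castR_add (a b : Fin n → ℤ) : castR (a + b) = castR a + castR b := by
  funext i; simp [castR]

/-- Iterated product lemma: powers separate multiples of the jets. -/
lemma genSep_pow {ι : Type} [Fintype ι] {W : Submodule ℂ (Laurent n)} {a : ι → ℤ}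
    (ha : ∀ i, 0 ≤ a i) (hg : GenSepJets W a) :
    ∀ j : ℕ, 1 ≤ j → GenSepJets (W ^ j) (fun i => (j : ℤ) * a i) := by
  intro j hj
  induction j, hj using Nat.le_induction with
  | base =>
    have h1 : (fun i => ((1 : ℕ) : ℤ) * a i) = a := funext fun i => by push_cast; ring
    rw [pow_one, h1]; exact hg
  | succ j hj IH =>
    have h2 : (fun i => ((j + 1 : ℕ) : ℤ) * a i)
        = fun i => ((j : ℕ) : ℤ) * a i + a i := funext fun i => by push_cast; ring
    rw [pow_succ, h2]
    exact genSep_mul (fun i => mul_nonneg (Int.natCast_nonneg j) (ha i)) ha IH hg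

/-- Powers of `V_{kΔ}` land in `V_{jkΔ}`. -/
lemma VS_pow {Δ : Set (Fin n → ℝ)} (hΔ : Convex ℝ Δ) {k : ℕ} (hk : 0 < k) :
    ∀ j : ℕ, 1 ≤ j → (VS (dilate k Δ)) ^ j ≤ VS (dilate (j * k) Δ) := by
  intro j hj
  induction j, hj using Nat.le_induction with
  | base => rw [pow_one, one_mul]
  | succ j hj IH =>
    rw [pow_succ]
    refine le_trans (mul_le_mul' IH (le_refl _)) ?_
    have h1 : VS (dilate (j * k) Δ) * VS (dilate k Δ) ≤ VS (dilate (j * k + k) Δ) :=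
      VS_mul fun u v hu hv => by rw [castR_add]; exact dilate_add_mem hΔ hk hu hv
    rwa [show j * k + k = (j + 1) * k by ring] at h1

section JSep

variable {ι : Type} [Fintype ι]

lemma le_jSep {W : Submodule ℂ (Laurent n)} {m : ι → ℝ} {t : ℝ}
    (h : GenSepJets W fun i => ⌈t * m i⌉) : (t : EReal) ≤ jSep W m :=
  le_sSup ⟨t, h, rfl⟩

lemma jSep_le {W : Submodule ℂ (Laurent n)} {m : ι → ℝ} {c : EReal}
    (h : ∀ t : ℝ, GenSepJets W (fun i => ⌈t * m i⌉) → (t : EReal) ≤ c) :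
    jSep W m ≤ c :=
  sSup_le (by rintro _ ⟨t, ht, rfl⟩; exact h t ht)

lemma jSep_mono {W W' : Submodule ℂ (Laurent n)} {m : ι → ℝ} (h : W ≤ W') :
    jSep W m ≤ jSep W' m :=
  sSup_le_sSup (Set.image_mono fun t ht => genSep_mono h ht)

end JSep

lemma ereal_mul_inv_le {x b : EReal} {k : ℝ} (hk : 0 < k) (h : x ≤ b * (k : EReal)) :
    x * ((k : EReal))⁻¹ ≤ b := by
  rw [← EReal.coe_inv]
  calc x * ((k⁻¹ : ℝ) : EReal) ≤ (b * (k : EReal)) * ((k⁻¹ : ℝ) : EReal) :=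
        mul_le_mul_of_nonneg_right h (EReal.coe_nonneg.2 (le_of_lt (inv_pos.2 hk)))
  _ = b := by
      rw [mul_assoc, ← EReal.coe_mul, mul_inv_cancel₀ hk.ne', EReal.coe_one, mul_one]

/-- **Lemma.** `s(Δ;m̄) = s(Δ°;m̄)` for every convex set `Δ ⊆ ℝⁿ`. -/
theorem sConv_interior {n r : ℕ} (Δ : Set (Fin n → ℝ)) (hΔ : Convex ℝ Δ)
    (hr : 0 < r) (m : Fin r → ℝ) (hm : ∀ i, 0 < m i) :
    sConv Δ m = sConv (interior Δ) m := by
  classical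
  by_cases hspan : affineSpan ℝ Δ = ⊤
  · -- full-dimensional case
    have hne : (interior Δ).Nonempty :=
      hΔ.interior_nonempty_iff_affineSpan_eq_top.2 hspan
    have hspan' : affineSpan ℝ (interior Δ) = ⊤ := by
      refine hΔ.interior.interior_nonempty_iff_affineSpan_eq_top.1 ?_
      rwa [interior_interior]
    obtain ⟨k₀, q, hk₀, hq⟩ := exists_lattice_point isOpen_interior hne
    rw [sConv, sConv, if_pos hspan, if_pos hspan']
    set B : EReal := ⨆ k : {k : ℕ // 0 < k},
      sTilde (dilate (k : ℕ) (interior Δ)) m * ((((k : ℕ) : ℝ))⁻¹ : EReal) with hBdef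
    apply le_antisymm
    · -- hard direction: s(Δ) ≤ s(Δ°)
      apply iSup_le
      rintro ⟨k, hk⟩
      have hkR : (0 : ℝ) < ((k : ℕ) : ℝ) := by exact_mod_cast hk
      refine ereal_mul_inv_le hkR ?_
      refine jSep_le fun t ht => ?_
      rcases le_or_gt t 0 with htneg | htpos
      · -- t ≤ 0 : translation alone
        have hmem : GenSepJets (VS (dilate (k + k₀) (interior Δ)))
            (fun i => ⌈t * m i⌉) := by
          refine genSep_mul_mono q (mono_mul_mem_VS fun u hu => ?_) ht
          rw [castR_add]
          exact shift_dilate_mem hΔ hk₀ hq k (castR u) hu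
        have hKpos : (0 : ℝ) < ((k + k₀ : ℕ) : ℝ) := by positivity
        have hb1 : (↑(t * ((k + k₀ : ℕ) : ℝ)⁻¹) : EReal) ≤ B := by
          rw [EReal.coe_mul, EReal.coe_inv]
          exact le_iSup_of_le ⟨k + k₀, by omega⟩
            (mul_le_mul_of_nonneg_right (le_jSep hmem)
              (by rw [← EReal.coe_inv]; exact EReal.coe_nonneg.2 (by positivity)))
        have hreal : t ≤ t * ((k + k₀ : ℕ) : ℝ)⁻¹ * ((k : ℕ) : ℝ) := by
          have hle1 : ((k + k₀ : ℕ) : ℝ)⁻¹ * ((k : ℕ) : ℝ) ≤ 1 := by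
            rw [← div_eq_inv_mul, div_le_one hKpos]
            push_cast; linarith [Nat.cast_nonneg (α := ℝ) k₀]
          nlinarith
        calc (t : EReal) ≤ (↑(t * ((k + k₀ : ℕ) : ℝ)⁻¹ * ((k : ℕ) : ℝ)) : EReal) :=
              EReal.coe_le_coe_iff.2 hreal
        _ = (↑(t * ((k + k₀ : ℕ) : ℝ)⁻¹) : EReal) * ((((k : ℕ) : ℝ)) : EReal) := by
              rw [EReal.coe_mul]
        _ ≤ B * ((((k : ℕ) : ℝ)) : EReal) :=
              mul_le_mul_of_nonneg_right hb1 (EReal.coe_nonneg.2 hkR.le)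
      · -- t > 0 : use powers
        by_contra hcon
        have hlt : B * ((((k : ℕ) : ℝ)) : EReal) < (t : EReal) := lt_of_not_ge hcon
        obtain ⟨x, hx1, hx2⟩ := EReal.lt_iff_exists_real_btwn.1 hlt
        have hxt : x < t := EReal.coe_lt_coe_iff.1 hx2
        have htx : (0 : ℝ) < t - x := by linarith
        set j : ℕ := max 1 (⌈(x * (k₀ : ℝ)) / (((k : ℕ) : ℝ) * (t - x))⌉₊ + 1) with hjdef
        have hj1 : 1 ≤ j := le_max_left _ _
        have hjpos : (0 : ℝ) < (j : ℝ) := by exact_mod_cast hj1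
        have hjgt : (x * (k₀ : ℝ)) / (((k : ℕ) : ℝ) * (t - x)) < (j : ℝ) := by
          have h1 := Nat.le_ceil ((x * (k₀ : ℝ)) / (((k : ℕ) : ℝ) * (t - x)))
          have h2 : (⌈(x * (k₀ : ℝ)) / (((k : ℕ) : ℝ) * (t - x))⌉₊ + 1 : ℕ) ≤ j :=
            le_max_right _ _
          have h2' : ((⌈(x * (k₀ : ℝ)) / (((k : ℕ) : ℝ) * (t - x))⌉₊ : ℝ) + 1) ≤ (j : ℝ) := by
            exact_mod_cast h2
          linarith
        have hineq : x * (k₀ : ℝ) < (j : ℝ) * (((k : ℕ) : ℝ) * (t - x)) := by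
          rwa [div_lt_iff₀ (by positivity)] at hjgt
        -- the jet vector
        set a : Fin r → ℤ := fun i => ⌈t * m i⌉ with hadef
        have ha0 : ∀ i, 0 ≤ a i := by
          intro i
          show (0 : ℤ) ≤ ⌈t * m i⌉
          exact (Int.lt_ceil.2 (by push_cast; exact mul_pos htpos (hm i))).le
        have hpow : GenSepJets ((VS (dilate k Δ)) ^ j) (fun i => (j : ℤ) * a i) :=
          genSep_pow ha0 ht j hj1
        have hceil : ∀ i, ⌈((j : ℝ) * t) * m i⌉ ≤ (j : ℤ) * a i := by
          intro i
          rw [Int.ceil_le]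
          have h1 : t * m i ≤ ((a i : ℤ) : ℝ) := Int.le_ceil _
          have h2 : (j : ℝ) * (t * m i) ≤ (j : ℝ) * ((a i : ℤ) : ℝ) :=
            mul_le_mul_of_nonneg_left h1 hjpos.le
          push_cast
          calc (j : ℝ) * t * m i = (j : ℝ) * (t * m i) := by ring
          _ ≤ (j : ℝ) * ((a i : ℤ) : ℝ) := h2
        have hanti : GenSepJets ((VS (dilate k Δ)) ^ j)
            (fun i => ⌈((j : ℝ) * t) * m i⌉) := genSep_anti hceil hpow
        have hVS : GenSepJets (VS (dilate (j * k) Δ))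
            (fun i => ⌈((j : ℝ) * t) * m i⌉) := genSep_mono (VS_pow hΔ hk j hj1) hanti
        have htrans : GenSepJets (VS (dilate (j * k + k₀) (interior Δ)))
            (fun i => ⌈((j : ℝ) * t) * m i⌉) := by
          refine genSep_mul_mono q (mono_mul_mem_VS fun u hu => ?_) hVS
          rw [castR_add]
          exact shift_dilate_mem hΔ hk₀ hq (j * k) (castR u) hu
        have hKpos : (0 : ℝ) < ((j * k + k₀ : ℕ) : ℝ) := by positivity
        have hb1 : (↑(((j : ℝ) * t) * ((j * k + k₀ : ℕ) : ℝ)⁻¹) : EReal) ≤ B := by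
          rw [EReal.coe_mul, EReal.coe_inv]
          exact le_iSup_of_le ⟨j * k + k₀, by omega⟩
            (mul_le_mul_of_nonneg_right (le_jSep htrans)
              (by rw [← EReal.coe_inv]; exact EReal.coe_nonneg.2 (by positivity)))
        have hxlt : x < ((j : ℝ) * t) * ((j * k + k₀ : ℕ) : ℝ)⁻¹ * ((k : ℕ) : ℝ) := by
          rw [mul_comm (((j : ℝ) * t)) (((j * k + k₀ : ℕ) : ℝ)⁻¹), mul_assoc,
            ← div_eq_inv_mul, lt_div_iff₀ hKpos]
          push_cast
          nlinarith
        have hfin : (↑x : EReal) < B * ((((k : ℕ) : ℝ)) : EReal) := by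
          refine lt_of_lt_of_le (EReal.coe_lt_coe_iff.2 hxlt) ?_
          rw [EReal.coe_mul]
          exact mul_le_mul_of_nonneg_right hb1 (EReal.coe_nonneg.2 hkR.le)
        exact absurd hx1 (not_lt.2 hfin.le)
    · -- easy direction: s(Δ°) ≤ s(Δ)
      apply iSup_le
      rintro ⟨k, hk⟩
      refine le_iSup_of_le ⟨k, hk⟩ ?_
      refine mul_le_mul_of_nonneg_right
        (jSep_mono (VS_mono (Set.image_mono interior_subset))) ?_
      rw [← EReal.coe_inv]
      exact EReal.coe_nonneg.2 (by positivity)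
  · -- degenerate case: both sides are 0
    have hint : interior Δ = ∅ := by
      rw [← Set.not_nonempty_iff_eq_empty]
      exact fun h => hspan (hΔ.interior_nonempty_iff_affineSpan_eq_top.1 h)
    have hspan' : affineSpan ℝ (interior Δ) ≠ ⊤ := by
      rw [hint, AffineSubspace.span_empty]
      exact AffineSubspace.bot_ne_top ℝ (Fin n → ℝ) (Fin n → ℝ)
    rw [sConv, sConv, if_neg hspan, if_neg hspan']

end OkSesh
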